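/- Let ρ̄, σ̄ ∈ M_n(ℂ) satisfy ρ̄σ̄ = σ̄ρ̄, set τ := ρ̄σ̄, and assume τ* = τ, τ² = τ and Tr(τ) = 1. Then for all α, γ ∈ M_n(ℂ) with αρ̄ = ρ̄α and γσ̄ = σ̄γ, one has Tr(τ · α · γ) = Tr(τ · α) · Tr(τ · γ). -/

import Mathlib

/-!
An idempotent `P` of trace `1` over a field of characteristic zero has range of dimension
`trace P = 1`, so `P M P = c • P` for every `M`; taking traces gives `c = Tr(P M)`, and hence
`Tr(P A P B) = Tr(P A) Tr(P B)`. The commutation relations let one insert a second copy of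
`τ = ρ̄σ̄` between `α` and `γ` under the trace, which reduces the theorem to this identity.
-/

open Matrix Module

theorem Module.End.exists_mul_mul_eq_smul_of_finrank_range_eq_one {K V : Type*} [Field K]
    [AddCommGroup V] [Module K V] {p : Module.End K V} (hrank : finrank K (LinearMap.range p) = 1)
    (f : Module.End K V) : ∃ c : K, p * f * p = c • p := by
  obtain ⟨c, hc, -⟩ := LinearMap.existsUnique_eq_smul_id_of_finrank_eq_one hrank
    ((p * f).restrict (p := LinearMap.range p) (q := LinearMap.range p)
      fun x _ => LinearMap.mem_range_self p (f x))
  refine ⟨c, LinearMap.ext fun x => ?_⟩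
  simpa using congr(Subtype.val ($hc ⟨p x, LinearMap.mem_range_self p x⟩))

theorem IsIdempotentElem.finrank_range_eq_one_of_trace_eq_one {K V : Type*} [Field K]
    [CharZero K] [AddCommGroup V] [Module K V] [FiniteDimensional K V] {p : Module.End K V}
    (hp : IsIdempotentElem p) (htr : LinearMap.trace K V p = 1) :
    finrank K (LinearMap.range p) = 1 := by
  rwa [(LinearMap.IsIdempotentElem.isProj_range p hp).trace, Nat.cast_eq_one] at htr

theorem Matrix.mul_mul_eq_trace_mul_smul {K n : Type*} [Field K] [CharZero K] [Fintype n]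
    [DecidableEq n] {P : Matrix n n K} (hP : IsIdempotentElem P) (htr : P.trace = 1)
    (M : Matrix n n K) : P * M * P = (P * M).trace • P := by
  obtain ⟨c, hc⟩ : ∃ c : K, P * M * P = c • P := by
    have hrank := (hP.map Matrix.toLinAlgEquiv').finrank_range_eq_one_of_trace_eq_one
      ((Matrix.trace_toLin'_eq P).trans htr)
    obtain ⟨c, hc⟩ := Module.End.exists_mul_mul_eq_smul_of_finrank_range_eq_one hrank
      (Matrix.toLinAlgEquiv' M)
    exact ⟨c, Matrix.toLinAlgEquiv'.injective (by simpa using hc)⟩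
  have htrace : (P * M).trace = c := calc
    (P * M).trace = (P * M * P).trace := by rw [trace_mul_cycle, hP.eq, trace_mul_comm]
    _ = c := by rw [hc, trace_smul, htr, smul_eq_mul, mul_one]
  rw [hc, htrace]

theorem Matrix.trace_mul_mul_mul_eq_trace_mul_mul_trace_mul {K n : Type*} [Field K]
    [CharZero K] [Fintype n] [DecidableEq n] {P : Matrix n n K} (hP : IsIdempotentElem P)
    (htr : P.trace = 1) (A B : Matrix n n K) :
    (P * A * P * B).trace = (P * A).trace * (P * B).trace := by
  rw [mul_mul_eq_trace_mul_smul hP htr, smul_mul, trace_smul, smul_eq_mul]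

theorem stmt4_general (n : ℕ) (ρ σ : Matrix (Fin n) (Fin n) ℂ)
    (hcomm : ρ * σ = σ * ρ)
    (hτ2 : (ρ * σ) * (ρ * σ) = ρ * σ)
    (htr : (ρ * σ).trace = 1) :
    ∀ α γ : Matrix (Fin n) (Fin n) ℂ, α * ρ = ρ * α → γ * σ = σ * γ →
      (ρ * σ * α * γ).trace = (ρ * σ * α).trace * (ρ * σ * γ).trace := by
  intro α γ hα hγ
  have hreorder : σ * (ρ * σ * α * ρ * γ) = σ * ρ * (σ * ρ) * α * γ := by
    simp only [Matrix.mul_assoc]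
    rw [← Matrix.mul_assoc α, hα, Matrix.mul_assoc]
  have hsandwich : (ρ * σ * α * γ).trace = (ρ * σ * α * (ρ * σ) * γ).trace := calc
    (ρ * σ * α * γ).trace = (ρ * σ * (ρ * σ) * α * γ).trace := by rw [hτ2]
    _ = (σ * ρ * (σ * ρ) * α * γ).trace := by rw [← hcomm]
    _ = (ρ * σ * α * ρ * γ * σ).trace := by rw [← hreorder, trace_mul_comm]
    _ = (ρ * σ * α * (ρ * σ) * γ).trace := by simp only [Matrix.mul_assoc, hγ]
  rw [hsandwich, trace_mul_mul_mul_eq_trace_mul_mul_trace_mul hτ2 htr]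

/-- Trace factorisation for anti-states: if `ρ̄`, `σ̄` commute, `τ := ρ̄σ̄` is a Hermitian
idempotent of trace 1, `α` commutes with `ρ̄` and `γ` with `σ̄`, then
`Tr(τ·α·γ) = Tr(τ·α)·Tr(τ·γ)`. -/
theorem stmt4 (n : ℕ) (ρ σ : Matrix (Fin n) (Fin n) ℂ)
    (hcomm : ρ * σ = σ * ρ)
    (hτH : (ρ * σ)ᴴ = ρ * σ) (hτ2 : (ρ * σ) * (ρ * σ) = ρ * σ)
    (htr : (ρ * σ).trace = 1) :
    ∀ α γ : Matrix (Fin n) (Fin n) ℂ, α * ρ = ρ * α → γ * σ = σ * γ →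
      (ρ * σ * α * γ).trace = (ρ * σ * α).trace * (ρ * σ * γ).trace :=
  stmt4_general n ρ σ hcomm hτ2 htr
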